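/- Let I ≥ 2 and let Y := {y ∈ ℝ^I : ∑_i y_i = 0 and −F_l ≤ ∑_i π_{il} y_i ≤ F_l for all l} with F_l ≥ 0, and let P_Y denote Euclidean projection onto Y. Then for every index i and every fixed vector of other components b_{−i} ∈ ℝ^{I−1}, there exists b_i ∈ ℝ such that, writing b = (b_i, b_{−i}), the projection satisfies (P_Y(b))_i = 0; that is, prosumer i can always choose a bid for which its cleared quantity in the sharing market is zero. -/

import Mathlib

open Finset

noncomputable section

/-- Feasible set of cleared quantities: balance plus line flow limits. -/
def Ysh (I L : ℕ) (ptdf : Fin I → Fin L → ℝ) (F : Fin L → ℝ) : Set (Fin I → ℝ) :=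
  {y | ∑ i, y i = 0 ∧ ∀ l, |∑ i, ptdf i l * y i| ≤ F l}

/-- `y` is the Euclidean projection of `b` onto `Ysh I L ptdf F`. -/
def IsProj (I L : ℕ) (ptdf : Fin I → Fin L → ℝ) (F : Fin L → ℝ)
    (b y : Fin I → ℝ) : Prop :=
  y ∈ Ysh I L ptdf F ∧
    ∀ z ∈ Ysh I L ptdf F, ∑ i, (b i - y i) ^ 2 ≤ ∑ i, (b i - z i) ^ 2

/-!
The Euclidean projection `P` onto a convex set `K ∋ 0` is firmly nonexpansive, hence
continuous, so the cleared quantity `g t = (P (b + t eᵢ))ᵢ` depends continuously on the own bid `t`.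
If some `w ∈ K` has `wᵢ < 0`, the variational inequality `⟪b + t eᵢ - P, w - P⟫ ≤ 0`, together with
the bound `‖P (b + t eᵢ)‖ ≤ ‖b‖` coming from `0 ∈ K`, forces `g t ≤ 0` for `t` very negative; the
symmetry `K = -K` gives `g t ≥ 0` for `t` very positive, and the intermediate value theorem yields
a zero. If instead every point of `K` has vanishing `i`-th coordinate, any bid works.
-/

open RealInnerProductSpace

structure IsMetricProjection {E : Type*} [NormedAddCommGroup E] [InnerProductSpace ℝ E]
    (K : Set E) (P : E → E) : Prop where
  mem : ∀ b, P b ∈ K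
  norm_sub_le_norm_sub : ∀ b, ∀ z ∈ K, ‖b - P b‖ ≤ ‖b - z‖

namespace IsMetricProjection

variable {E : Type*} [NormedAddCommGroup E] [InnerProductSpace ℝ E] {K : Set E} {P : E → E}

theorem inner_sub_le_zero (hP : IsMetricProjection K P) (hK : Convex ℝ K) (b : E) {z : E}
    (hz : z ∈ K) : ⟪b - P b, z - P b⟫ ≤ 0 := by
  have : Nonempty K := ⟨⟨P b, hP.mem b⟩⟩
  refine (norm_eq_iInf_iff_real_inner_le_zero hK (hP.mem b)).1 (le_antisymm ?_ ?_) z hz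
  · exact le_ciInf fun w => hP.norm_sub_le_norm_sub b w w.2
  · exact ciInf_le ⟨0, by rintro _ ⟨w, rfl⟩; positivity⟩ (⟨P b, hP.mem b⟩ : K)

theorem norm_sub_sq_le_inner (hP : IsMetricProjection K P) (hK : Convex ℝ K) (a b : E) :
    ‖P a - P b‖ ^ 2 ≤ ⟪a - b, P a - P b⟫ := by
  have ha := hP.inner_sub_le_zero hK a (hP.mem b)
  have hb := hP.inner_sub_le_zero hK b (hP.mem a)
  have : ⟪a - b, P a - P b⟫ - ‖P a - P b‖ ^ 2
      = -⟪a - P a, P b - P a⟫ - ⟪b - P b, P a - P b⟫ := by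
    rw [← real_inner_self_eq_norm_sq]
    simp only [inner_sub_left, inner_sub_right, real_inner_comm]
    ring
  linarith

theorem lipschitzWith_one (hP : IsMetricProjection K P) (hK : Convex ℝ K) :
    LipschitzWith 1 P := by
  refine LipschitzWith.mk_one fun a b => ?_
  rw [dist_eq_norm, dist_eq_norm]
  have h := (hP.norm_sub_sq_le_inner hK a b).trans (real_inner_le_norm _ _)
  nlinarith [norm_nonneg (P a - P b), norm_nonneg (a - b)]

theorem norm_sq_le_inner (hP : IsMetricProjection K P) (hK : Convex ℝ K) (h0 : (0 : E) ∈ K)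
    (b : E) : ‖P b‖ ^ 2 ≤ ⟪b, P b⟫ := by
  have h := hP.inner_sub_le_zero hK b h0
  rw [zero_sub, inner_neg_right, inner_sub_left, real_inner_self_eq_norm_sq] at h
  linarith

theorem norm_apply_add_smul_le (hP : IsMetricProjection K P) (hK : Convex ℝ K)
    (h0 : (0 : E) ∈ K) (b v : E) {t : ℝ} (ht : t ≤ 0) (hv : 0 ≤ ⟪P (b + t • v), v⟫) :
    ‖P (b + t • v)‖ ≤ ‖b‖ := by
  set y := P (b + t • v)
  have h := hP.norm_sq_le_inner hK h0 (b + t • v)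
  rw [inner_add_left, inner_smul_left, real_inner_comm _ v, conj_trivial] at h
  have : t * ⟪y, v⟫ ≤ 0 := mul_nonpos_of_nonpos_of_nonneg ht hv
  nlinarith [real_inner_le_norm b y, norm_nonneg y, norm_nonneg b]

theorem exists_inner_apply_add_smul_nonpos (hP : IsMetricProjection K P) (hK : Convex ℝ K)
    (h0 : (0 : E) ∈ K) (b : E) {v w : E} (hw : w ∈ K) (hwv : ⟪w, v⟫ < 0) :
    ∃ t : ℝ, ⟪P (b + t • v), v⟫ ≤ 0 := by
  -- once `‖y‖ ≤ ‖b‖`, `M` bounds `|⟪b - y, w - y⟫|`, and `t` is chosen so that `t ⟪w, v⟫ = M + 1`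
  set M := 2 * ‖b‖ * (‖w‖ + ‖b‖)
  set t := (M + 1) / ⟪w, v⟫
  have ht : t ≤ 0 := div_nonpos_of_nonneg_of_nonpos (by positivity) hwv.le
  have htw : t * ⟪w, v⟫ = M + 1 := div_mul_cancel₀ _ hwv.ne
  refine ⟨t, not_lt.1 fun hpos => ?_⟩
  set y := P (b + t • v)
  have hy : ‖y‖ ≤ ‖b‖ := hP.norm_apply_add_smul_le hK h0 b v ht hpos.le
  have hvi := hP.inner_sub_le_zero hK (b + t • v) hw
  have hsplit : ⟪b + t • v - y, w - y⟫ = ⟪b - y, w - y⟫ + t * (⟪w, v⟫ - ⟪y, v⟫) := by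
    rw [add_sub_right_comm, inner_add_left, inner_smul_left, conj_trivial, inner_sub_right v,
      real_inner_comm w, real_inner_comm y]
  have hcross : -M ≤ ⟪b - y, w - y⟫ := by
    have h1 : ‖b - y‖ ≤ ‖b‖ + ‖b‖ := by linarith [norm_sub_le b y]
    have h2 : ‖w - y‖ ≤ ‖w‖ + ‖b‖ := by linarith [norm_sub_le w y]
    have := neg_le_of_abs_le ((abs_real_inner_le_norm (b - y) (w - y)).trans
      (mul_le_mul h1 h2 (norm_nonneg _) (by positivity)))
    linarith
  have : 0 ≤ -(t * ⟪y, v⟫) := neg_nonneg.2 (mul_nonpos_of_nonpos_of_nonneg ht hpos.le)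
  linarith

theorem exists_inner_apply_add_smul_eq_zero (hP : IsMetricProjection K P) (hK : Convex ℝ K)
    (h0 : (0 : E) ∈ K) (hneg : ∀ z ∈ K, -z ∈ K) (b v : E) :
    ∃ t : ℝ, ⟪P (b + t • v), v⟫ = 0 := by
  by_cases horth : ∀ z ∈ K, ⟪z, v⟫ = 0
  · exact ⟨0, horth _ (hP.mem _)⟩
  push Not at horth
  obtain ⟨w, hw, hwv⟩ : ∃ w ∈ K, ⟪w, v⟫ < 0 := by
    obtain ⟨z, hz, hzv⟩ := horth
    rcases hzv.lt_or_gt with h | h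
    · exact ⟨z, hz, h⟩
    · exact ⟨-z, hneg z hz, by rwa [inner_neg_left, neg_lt_zero]⟩
  have hcont : Continuous fun t : ℝ => ⟪P (b + t • v), v⟫ :=
    ((hP.lipschitzWith_one hK).continuous.comp (by fun_prop)).inner continuous_const
  have hnonneg : ∃ t : ℝ, 0 ≤ ⟪P (b + t • v), v⟫ := by
    obtain ⟨s, hs⟩ := hP.exists_inner_apply_add_smul_nonpos hK h0 b (v := -v) (hneg w hw)
      (by rwa [inner_neg_neg])
    refine ⟨-s, ?_⟩
    rwa [neg_smul, ← smul_neg, ← neg_nonpos, ← inner_neg_right]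
  exact mem_range_of_exists_le_of_exists_ge hcont
    (hP.exists_inner_apply_add_smul_nonpos hK h0 b hw hwv) hnonneg

end IsMetricProjection

section Ysh

variable {I L : ℕ} {ptdf : Fin I → Fin L → ℝ} {F : Fin L → ℝ}

theorem zero_mem_Ysh (hF : ∀ l, 0 ≤ F l) : (0 : Fin I → ℝ) ∈ Ysh I L ptdf F :=
  ⟨by simp, fun l => by simpa using hF l⟩

theorem neg_mem_Ysh {y : Fin I → ℝ} (hy : y ∈ Ysh I L ptdf F) : -y ∈ Ysh I L ptdf F :=
  ⟨by simp [hy.1], fun l => by simpa using hy.2 l⟩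

theorem convex_Ysh : Convex ℝ (Ysh I L ptdf F) := by
  intro x hx y hy a c ha hc hac
  have hflow : ∀ l, ∑ i, ptdf i l * (a • x + c • y) i
      = a * ∑ i, ptdf i l * x i + c * ∑ i, ptdf i l * y i := fun l => by
    simp only [Pi.add_apply, Pi.smul_apply, smul_eq_mul, mul_sum, ← sum_add_distrib]
    exact sum_congr rfl fun _ _ => by ring
  refine ⟨?_, fun l => ?_⟩
  · simp only [Pi.add_apply, Pi.smul_apply, smul_eq_mul, sum_add_distrib, ← mul_sum, hx.1, hy.1]
    ring
  · rw [hflow]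
    calc |a * ∑ i, ptdf i l * x i + c * ∑ i, ptdf i l * y i|
        ≤ a * |∑ i, ptdf i l * x i| + c * |∑ i, ptdf i l * y i| := by
          grw [abs_add_le, abs_mul, abs_mul, abs_of_nonneg ha, abs_of_nonneg hc]
      _ ≤ a * F l + c * F l := by gcongr; exacts [hx.2 l, hy.2 l]
      _ = F l := by rw [← add_mul, hac, one_mul]

end Ysh

open WithLp in
theorem isMetricProjection_of_isProj {I L : ℕ} {ptdf : Fin I → Fin L → ℝ} {F : Fin L → ℝ}
    {P : (Fin I → ℝ) → (Fin I → ℝ)} (hP : ∀ b, IsProj I L ptdf F b (P b)) :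
    IsMetricProjection (ofLp ⁻¹' Ysh I L ptdf F)
      (fun x : EuclideanSpace ℝ (Fin I) => toLp 2 (P (ofLp x))) where
  mem b := (hP _).1
  norm_sub_le_norm_sub b z hz := by
    rw [← sq_le_sq₀ (norm_nonneg _) (norm_nonneg _), EuclideanSpace.real_norm_sq_eq,
      EuclideanSpace.real_norm_sq_eq]
    simpa using (hP (ofLp b)).2 _ hz

theorem stmt_4_general (I L : ℕ)
    (ptdf : Fin I → Fin L → ℝ) (F : Fin L → ℝ) (hF : ∀ l, 0 ≤ F l)
    (P : (Fin I → ℝ) → (Fin I → ℝ)) (hP : ∀ b, IsProj I L ptdf F b (P b))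
    (i : Fin I) (b : Fin I → ℝ) :
    ∃ bi : ℝ, P (Function.update b i bi) i = 0 := by
  obtain ⟨t, ht⟩ := (isMetricProjection_of_isProj hP).exists_inner_apply_add_smul_eq_zero
    (convex_Ysh.linear_preimage (WithLp.linearEquiv 2 ℝ (Fin I → ℝ)).toLinearMap)
    (zero_mem_Ysh hF) (fun _ hz => neg_mem_Ysh hz) (WithLp.toLp 2 (Function.update b i 0))
    (EuclideanSpace.single i 1)
  have hbid : WithLp.ofLp (WithLp.toLp 2 (Function.update b i 0) + t • EuclideanSpace.single i 1)
      = Function.update b i t := by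
    ext j
    by_cases hj : j = i <;> simp [hj]
  refine ⟨t, ?_⟩
  simpa [EuclideanSpace.inner_single_right, hbid] using ht

/-- For any fixed bids of the others, prosumer `i` can always choose its own bid
so that its cleared quantity `(P_Y b) i` is zero. -/
theorem stmt_4 (I L : ℕ) (hI : 2 ≤ I)
    (ptdf : Fin I → Fin L → ℝ) (F : Fin L → ℝ) (hF : ∀ l, 0 ≤ F l)
    (P : (Fin I → ℝ) → (Fin I → ℝ)) (hP : ∀ b, IsProj I L ptdf F b (P b))
    (i : Fin I) (b : Fin I → ℝ) :
    ∃ bi : ℝ, P (Function.update b i bi) i = 0 :=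
  stmt_4_general I L ptdf F hF P hP i b
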